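/- arXiv:1312.5018 — 2 statements merged into one kernel-verified Lean document; each statement's English description precedes it below -/
import Mathlib

section
/- If f belongs to the model space K_u and θ is an inner function such that f/θ ∈ H², then f/θ also belongs to K_u. -/
/-!
Since `θ` is unimodular, `⟨g, u h⟩ = ⟨θ g, θ u h⟩ = ⟨f, u (θ h)⟩` for every `h ∈ H²`,
and the right-hand side vanishes because `θ h ∈ H²`: the Fourier coefficients of `θ h` are the
convolution of those of `θ` and `h`, and both of these are supported on `n ≥ 0`.
-/

open Complex MeasureTheory

noncomputable section

instance : Fact (0 < 2 * Real.pi) := ⟨by positivity⟩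

/-- The circle, as `ℝ / 2πℤ`. -/
abbrev Circ := AddCircle (2 * Real.pi)

/-- Normalized Lebesgue (Haar) measure `m` on the circle. -/
abbrev mC : Measure Circ := AddCircle.haarAddCircle

/-- The Lebesgue space `L²(𝕋, m)`. -/
abbrev L2C := MeasureTheory.Lp ℂ 2 mC

/-- The identity coordinate `ζ = e^{iθ}` on the circle. -/
def zeta (x : Circ) : ℂ := fourier 1 x

/-- The `L²` inner product `⟨f, g⟩ = ∫ f conj(g) dm`, on the level of functions. -/
def ip (f g : Circ → ℂ) : ℂ := ∫ x, f x * (starRingEnd ℂ) (g x) ∂mC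

/-- A boundary function belongs to `H²` (as a subspace of `L²`) when all of its
negatively indexed Fourier coefficients vanish. -/
def memH2 (f : Circ → ℂ) : Prop := ∀ n : ℤ, n < 0 → fourierCoeff f n = 0

/-- The boundary function of an inner function: measurable, unimodular a.e.,
and of analytic type (negative Fourier coefficients vanish). -/
def BdryInner (u : Circ → ℂ) : Prop :=
  AEStronglyMeasurable u mC ∧ (∀ᵐ x ∂mC, ‖u x‖ = 1) ∧ memH2 u

/-- Membership in the model space `K_u = H² ⊖ uH²`: `f ∈ H²` and `f ⟂ uH²`. -/
def memKu (u : Circ → ℂ) (f : L2C) : Prop :=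
  memH2 ⇑f ∧ ∀ h : L2C, memH2 ⇑h → ip ⇑f (fun x => u x * h x) = 0

open scoped ENNReal

section FourierMul

open AddCircle

variable {T : ℝ} [Fact (0 < T)]

theorem fourierCoeff_mul_fourier (φ : AddCircle T → ℂ) (n k : ℤ) :
    fourierCoeff (fun x => φ x * fourier k x) n = fourierCoeff φ (n - k) := by
  refine integral_congr_ae (.of_forall fun x => ?_)
  simp only [smul_eq_mul, sub_eq_add_neg, neg_add, neg_neg, fourier_add]
  ring

theorem hasSum_fourierCoeff_mul {θ : AddCircle T → ℂ} (hθ : MemLp θ ∞ haarAddCircle)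
    (h : Lp ℂ 2 (haarAddCircle : Measure (AddCircle T))) (n : ℤ) :
    HasSum (fun k => fourierCoeff h k * fourierCoeff θ (n - k))
      (fourierCoeff (fun x => θ x * h x) n) := by
  -- pair the `L²` Fourier series of `h` with `w = conj (e_{-n} θ)`,
  -- which represents `v ↦ (θ v)^(n)`
  have hw : MemLp (fun x => starRingEnd ℂ (fourier (-n) x * θ x)) 2 haarAddCircle :=
    (hθ.mono_exponent le_top).of_le
      (continuous_star.comp_aestronglyMeasurable
        ((map_continuous (fourier (-n))).aestronglyMeasurable.mul hθ.1))
      (.of_forall fun x => by simp [Circle.norm_coe])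
  have inner_w : ∀ v : Lp ℂ 2 (haarAddCircle : Measure (AddCircle T)),
      inner ℂ (hw.toLp _) v = fourierCoeff (fun x => θ x * v x) n := by
    intro v
    rw [L2.inner_def, fourierCoeff]
    refine integral_congr_ae ?_
    filter_upwards [hw.coeFn_toLp] with x hx
    rw [RCLike.inner_apply, hx]
    simp only [map_mul, starRingEnd_self_apply, smul_eq_mul]
    ring
  have hsum := (innerSL ℂ (hw.toLp _)).hasSum (hasSum_fourier_series_L2 h)
  rw [innerSL_apply_apply, inner_w] at hsum
  refine hsum.congr_fun fun k => ?_
  rw [innerSL_apply_apply, inner_smul_right, inner_w]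
  have hek : (fun x => θ x * fourierLp (T := T) 2 k x) =ᵐ[haarAddCircle]
      fun x => θ x * fourier k x := by
    filter_upwards [coeFn_fourierLp 2 k] with x hx
    rw [hx]
  rw [fourierCoeff_congr_ae hek, fourierCoeff_mul_fourier]

end FourierMul

theorem memH2_mul {θ : Circ → ℂ} (hθ : MemLp θ ∞ mC) (hθH2 : memH2 θ) {h : L2C}
    (hh : memH2 ⇑h) : memH2 fun x => θ x * h x := by
  intro n hn
  refine (hasSum_fourierCoeff_mul hθ h n).unique (hasSum_zero.congr_fun fun k => ?_)
  rcases lt_or_ge k 0 with hk | hk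
  · rw [hh k hk, zero_mul]
  · rw [hθH2 (n - k) (by omega), mul_zero]

theorem ip_congr_ae {f₁ f₂ g₁ g₂ : Circ → ℂ} (hf : f₁ =ᵐ[mC] f₂) (hg : g₁ =ᵐ[mC] g₂) :
    ip f₁ g₁ = ip f₂ g₂ := by
  refine integral_congr_ae ?_
  filter_upwards [hf, hg] with x hfx hgx
  rw [hfx, hgx]

theorem ip_mul_mul_of_norm_eq_one {θ : Circ → ℂ} (hθ : ∀ᵐ x ∂mC, ‖θ x‖ = 1) (f g : Circ → ℂ) :
    ip (fun x => θ x * f x) (fun x => θ x * g x) = ip f g := by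
  refine integral_congr_ae ?_
  filter_upwards [hθ] with x hx
  have hθθ : θ x * starRingEnd ℂ (θ x) = 1 := by
    rw [mul_conj, normSq_eq_norm_sq, hx]
    norm_num
  calc θ x * f x * starRingEnd ℂ (θ x * g x)
      = θ x * starRingEnd ℂ (θ x) * (f x * starRingEnd ℂ (g x)) := by rw [map_mul]; ring
    _ = f x * starRingEnd ℂ (g x) := by rw [hθθ, one_mul]

theorem stmt_8_general (u θ : Circ → ℂ) (hθ : BdryInner θ)
    (f g : L2C) (hf : memKu u f) (hg : memH2 ⇑g)
    (hdiv : ∀ᵐ x ∂mC, f x = θ x * g x) :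
    memKu u g := by
  obtain ⟨hθm, hθ1, hθH2⟩ := hθ
  have hθtop : MemLp θ ∞ mC := memLp_top_of_bound hθm 1 (hθ1.mono fun x hx => hx.le)
  refine ⟨hg, fun h hh => ?_⟩
  set θh : L2C := ((Lp.memLp h).mul' hθtop).toLp _
  have hθh : θh =ᵐ[mC] fun x => θ x * h x := MemLp.coeFn_toLp _
  have hθhH2 : memH2 ⇑θh := by
    rw [memH2, fourierCoeff_congr_ae hθh]
    exact memH2_mul hθtop hθH2 hh
  calc ip g (fun x => u x * h x)
      = ip (fun x => θ x * g x) (fun x => θ x * (u x * h x)) :=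
        (ip_mul_mul_of_norm_eq_one hθ1 _ _).symm
    _ = ip f (fun x => u x * θh x) := by
        refine ip_congr_ae (Filter.EventuallyEq.symm hdiv) ?_
        filter_upwards [hθh] with x hx
        rw [hx]
        ring
    _ = 0 := hf.2 θh hθhH2

/-- If `f ∈ K_u` and `θ` is an inner function dividing `f`, i.e.
`f/θ = g ∈ H²` (equivalently `f = θ·g` a.e. on the circle), then `f/θ ∈ K_u`. -/
theorem stmt_8 (u θ : Circ → ℂ) (hu : BdryInner u) (hθ : BdryInner θ)
    (f g : L2C) (hf : memKu u f) (hg : memH2 ⇑g)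
    (hdiv : ∀ᵐ x ∂mC, f x = θ x * g x) :
    memKu u g :=
  stmt_8_general u θ hθ f g hf hg hdiv
end
end

section
/- Let u be an inner function with u(0) = 0, and for α ∈ 𝕋 define U_α = S_u + α(1 ⊗ u/z) on K_u, where S_u f = P_u(zf) is the compressed shift and (1 ⊗ u/z)f = ⟨f, u/z⟩·1. Then U_α is a unitary operator on K_u. -/
open Complex MeasureTheory

noncomputable section

/-- `ClarkRel u α f g` says `g = U_α f = P_u(zf) + α⟨f, u/z⟩·1`, characterized by
having the correct inner products against every member of `K_u`. -/
def ClarkRel (u : Circ → ℂ) (α : ℂ) (f g : L2C) : Prop :=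
  ∀ k : L2C, memKu u k →
    ip ⇑g ⇑k = ip (fun x => zeta x * f x) ⇑k
      + α * ip ⇑f (fun x => u x * (starRingEnd ℂ) (zeta x)) * ip (fun _ => (1 : ℂ)) ⇑k

/-!
Once the concrete objects are abstracted, the theorem is Hilbert-space algebra. Multiplication by
`z` is a unitary `S` of `L²` with `H² = ℂ 1 ⊕ S H²`, and multiplication by `u` is an isometry `M`
commuting with `S`, with `u = M 1 ∈ H²` and `1 ⟂ M H²`; the latter is `u(0) = 0`, via Parseval.
On `K_u = H² ⊖ M H²` one has `U_α f = S f - ⟪u, S f⟫ u + α ⟪u, S f⟫ 1`. Writing `h = ĥ(0) + z h₁`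
shows `U_α f ⟂ u H²`, and since `1`, `u` and `S f - ⟪u, S f⟫ u` are mutually orthogonal,
Pythagoras gives `‖U_α f‖ = ‖S f‖ = ‖f‖`. The inverse is `g ↦ S⁻¹ (g - ĝ(0) + ᾱ ĝ(0) u)`, and
`ClarkRel` pins `g` down because it prescribes the inner products of `g` with all of `K_u`.
-/

open scoped ComplexConjugate ENNReal InnerProductSpace

namespace MeasureTheory

variable {α : Type*} [MeasurableSpace α] {μ : Measure α} {p : ℝ≥0∞} {w : α → ℂ}

theorem MemLp.mul_of_norm_eq_one (hw : AEStronglyMeasurable w μ) (hw1 : ∀ᵐ x ∂μ, ‖w x‖ = 1)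
    {f : α → ℂ} (hf : MemLp f p μ) : MemLp (fun x => w x * f x) p μ :=
  hf.of_le (hw.mul hf.aestronglyMeasurable) <| hw1.mono fun x hx => by simp [hx]

variable [Fact (1 ≤ p)]

variable (μ p) in
def Lp.mulUnimodular (w : α → ℂ) (hw : AEStronglyMeasurable w μ) (hw1 : ∀ᵐ x ∂μ, ‖w x‖ = 1) :
    Lp ℂ p μ ≃ₗᵢ[ℂ] Lp ℂ p μ where
  toFun f := ((Lp.memLp f).mul_of_norm_eq_one hw hw1).toLp _
  invFun f := ((Lp.memLp f).mul_of_norm_eq_one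
    (RCLike.continuous_conj.comp_aestronglyMeasurable hw) (by simpa using hw1)).toLp _
  map_add' f g := by
    rw [← MemLp.toLp_add]
    refine MemLp.toLp_congr _ _ ?_
    filter_upwards [Lp.coeFn_add f g] with x hx
    simp only [Pi.add_apply] at hx ⊢
    rw [hx, mul_add]
  map_smul' c f := by
    rw [← MemLp.toLp_const_smul]
    refine MemLp.toLp_congr _ _ ?_
    filter_upwards [Lp.coeFn_smul c f] with x hx
    simp only [Pi.smul_apply, smul_eq_mul, RingHom.id_apply] at hx ⊢
    rw [hx, mul_left_comm]
  left_inv f := Lp.ext <| (MemLp.coeFn_toLp _).trans <| by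
    filter_upwards [MemLp.coeFn_toLp ((Lp.memLp f).mul_of_norm_eq_one hw hw1), hw1] with x hx hx1
    rw [hx, ← mul_assoc, Complex.conj_mul', hx1]
    simp
  right_inv f := Lp.ext <| (MemLp.coeFn_toLp _).trans <| by
    filter_upwards [MemLp.coeFn_toLp ((Lp.memLp f).mul_of_norm_eq_one
      (RCLike.continuous_conj.comp_aestronglyMeasurable hw) (by simpa using hw1)), hw1]
      with x hx hx1
    rw [hx, ← mul_assoc, Complex.mul_conj', hx1]
    simp
  norm_map' f := by
    simp only [LinearEquiv.coe_mk, LinearMap.coe_mk, AddHom.coe_mk, Lp.norm_def]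
    refine congrArg ENNReal.toReal ?_
    rw [eLpNorm_congr_ae (MemLp.coeFn_toLp _)]
    exact eLpNorm_congr_norm_ae <| hw1.mono fun x hx => by simp [hx]

theorem Lp.coeFn_mulUnimodular (hw : AEStronglyMeasurable w μ) (hw1 : ∀ᵐ x ∂μ, ‖w x‖ = 1)
    (f : Lp ℂ p μ) : ⇑(Lp.mulUnimodular μ p w hw hw1 f) =ᵐ[μ] fun x => w x * f x :=
  MemLp.coeFn_toLp ((Lp.memLp f).mul_of_norm_eq_one hw hw1)

theorem Lp.mulUnimodular_comm {w' : α → ℂ} (hw : AEStronglyMeasurable w μ)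
    (hw1 : ∀ᵐ x ∂μ, ‖w x‖ = 1) (hw' : AEStronglyMeasurable w' μ) (hw'1 : ∀ᵐ x ∂μ, ‖w' x‖ = 1)
    (f : Lp ℂ p μ) :
    Lp.mulUnimodular μ p w hw hw1 (Lp.mulUnimodular μ p w' hw' hw'1 f) =
      Lp.mulUnimodular μ p w' hw' hw'1 (Lp.mulUnimodular μ p w hw hw1 f) := by
  refine Lp.ext ?_
  filter_upwards [coeFn_mulUnimodular hw hw1 (mulUnimodular μ p w' hw' hw'1 f),
    coeFn_mulUnimodular hw' hw'1 f, coeFn_mulUnimodular hw' hw'1 (mulUnimodular μ p w hw hw1 f),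
    coeFn_mulUnimodular hw hw1 f] with x h₁ h₂ h₃ h₄
  rw [h₁, h₂, h₃, h₄, mul_left_comm]

end MeasureTheory

namespace Clark

variable {E : Type*} [NormedAddCommGroup E] [InnerProductSpace ℂ E]

/-- `H = ℂ e ⊕ S H` orthogonally, with `‖e‖ = 1`: the abstract shape of `H² = ℂ ⊕ z H²`. -/
structure IsWanderingUnitVector (H : Submodule ℂ E) (S : E ≃ₗᵢ[ℂ] E) (e : E) : Prop where
  apply_mem : ∀ x ∈ H, S x ∈ H
  symm_apply_mem : ∀ x ∈ H, ⟪e, x⟫_ℂ = 0 → S.symm x ∈ H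
  mem : e ∈ H
  norm_eq_one : ‖e‖ = 1
  inner_apply_eq_zero : ∀ x ∈ H, ⟪e, S x⟫_ℂ = 0

/-- The abstract shape of multiplication by an inner function `u` with `u(0) = 0`. -/
structure IsInnerMultiplier (H : Submodule ℂ E) (S : E ≃ₗᵢ[ℂ] E) (e : E) (M : E →ₗᵢ[ℂ] E) :
    Prop where
  commute : ∀ x, S (M x) = M (S x)
  apply_mem : M e ∈ H
  inner_apply_eq_zero : ∀ x ∈ H, ⟪e, M x⟫_ℂ = 0

def modelSpace (H : Submodule ℂ E) (M : E →ₗᵢ[ℂ] E) : Submodule ℂ E :=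
  H ⊓ (H.map M.toLinearMap)ᗮ

/-- For `f` in the model space, the projection of `S f` onto it is `S f - ⟪M e, S f⟫ M e`, so this
is the paper's `U_α f = P_u(z f) + α ⟨f, u/z⟩ 1`. -/
def clarkOp (S : E ≃ₗᵢ[ℂ] E) (M : E →ₗᵢ[ℂ] E) (e : E) (α : ℂ) (f : E) : E :=
  S f - ⟪M e, S f⟫_ℂ • M e + (α * ⟪M e, S f⟫_ℂ) • e

def clarkOpInv (S : E ≃ₗᵢ[ℂ] E) (M : E →ₗᵢ[ℂ] E) (e : E) (α : ℂ) (g : E) : E :=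
  S.symm (g - ⟪e, g⟫_ℂ • e + (conj α * ⟪e, g⟫_ℂ) • M e)

variable {H : Submodule ℂ E} {S : E ≃ₗᵢ[ℂ] E} {M : E →ₗᵢ[ℂ] E} {e : E}

theorem mem_modelSpace_iff {x : E} :
    x ∈ modelSpace H M ↔ x ∈ H ∧ ∀ y ∈ H, ⟪M y, x⟫_ℂ = 0 := by
  simp [modelSpace, Submodule.mem_orthogonal]

theorem IsWanderingUnitVector.exists_eq_smul_add (hS : IsWanderingUnitVector H S e) {x : E}
    (hx : x ∈ H) : ∃ y ∈ H, x = ⟪e, x⟫_ℂ • e + S y := by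
  refine ⟨S.symm (x - ⟪e, x⟫_ℂ • e), hS.symm_apply_mem _ (H.sub_mem hx (H.smul_mem _ hS.mem)) ?_,
    by simp⟩
  rw [inner_sub_right, inner_smul_right, inner_self_eq_norm_sq_to_K, hS.norm_eq_one]
  simp

theorem IsInnerMultiplier.inner_apply_left_eq_zero (hM : IsInnerMultiplier H S e M) {x : E}
    (hx : x ∈ H) : ⟪M x, e⟫_ℂ = 0 :=
  inner_eq_zero_symm.mp (hM.inner_apply_eq_zero x hx)

theorem inner_apply_eq_zero_of_mem_modelSpace {k : E} (hk : k ∈ modelSpace H M) {x : E}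
    (hx : x ∈ H) : ⟪k, M x⟫_ℂ = 0 :=
  inner_eq_zero_symm.mp ((mem_modelSpace_iff.mp hk).2 x hx)

theorem clarkOp_mem (hS : IsWanderingUnitVector H S e) (hM : IsInnerMultiplier H S e M) (α : ℂ)
    {f : E} (hf : f ∈ modelSpace H M) : clarkOp S M e α f ∈ modelSpace H M := by
  obtain ⟨hfH, hf_perp⟩ := mem_modelSpace_iff.mp hf
  refine mem_modelSpace_iff.mpr ⟨H.add_mem (H.sub_mem (hS.apply_mem f hfH)
    (H.smul_mem _ hM.apply_mem)) (H.smul_mem _ hS.mem), fun h hh => ?_⟩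
  obtain ⟨y, hy, hhy⟩ := hS.exists_eq_smul_add hh
  have hMhSf : ⟪M h, S f⟫_ℂ = conj ⟪e, h⟫_ℂ * ⟪M e, S f⟫_ℂ := by
    rw [hhy, map_add, map_smul, ← hM.commute, inner_add_left, inner_smul_left, S.inner_map_map,
      hf_perp y hy, add_zero, ← hhy]
  have hMhMe : ⟪M h, M e⟫_ℂ = conj ⟪e, h⟫_ℂ := by rw [M.inner_map_map, inner_conj_symm]
  simp only [clarkOp, inner_add_right, inner_sub_right, inner_smul_right, hMhSf, hMhMe,
    hM.inner_apply_left_eq_zero hh]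
  ring

theorem norm_clarkOp (hS : IsWanderingUnitVector H S e) (hM : IsInnerMultiplier H S e M) {α : ℂ}
    (hα : ‖α‖ = 1) {f : E} (hf : f ∈ H) : ‖clarkOp S M e α f‖ = ‖f‖ := by
  set c := ⟪M e, S f⟫_ℂ
  set x := S f - c • M e
  have hex : ⟪x, e⟫_ℂ = 0 := inner_eq_zero_symm.mp <| by
    simp [x, inner_sub_right, inner_smul_right, hS.inner_apply_eq_zero f hf,
      hM.inner_apply_eq_zero e hS.mem]
  have hMex : ⟪x, M e⟫_ℂ = 0 := inner_eq_zero_symm.mp <| by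
    simp [x, c, inner_sub_right, inner_smul_right, hS.norm_eq_one]
  have hU : clarkOp S M e α f = x + (α * c) • e := by simp only [clarkOp, x, c]
  have hSf : S f = x + c • M e := by simp [x]
  refine (mul_self_inj (norm_nonneg _) (norm_nonneg _)).mp ?_
  rw [hU, ← S.norm_map f, hSf,
    norm_add_sq_eq_norm_sq_add_norm_sq_of_inner_eq_zero (𝕜 := ℂ) _ _
      (by rw [inner_smul_right, hex, mul_zero]),
    norm_add_sq_eq_norm_sq_add_norm_sq_of_inner_eq_zero (𝕜 := ℂ) _ _
      (by rw [inner_smul_right, hMex, mul_zero])]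
  simp [norm_smul, hα, hS.norm_eq_one]

theorem inner_clarkOp {k : E} (hS : IsWanderingUnitVector H S e) (hk : k ∈ modelSpace H M)
    (α : ℂ) (f : E) :
    ⟪k, clarkOp S M e α f⟫_ℂ = ⟪k, S f⟫_ℂ + α * ⟪M e, S f⟫_ℂ * ⟪k, e⟫_ℂ := by
  simp only [clarkOp, inner_add_right, inner_sub_right, inner_smul_right,
    inner_apply_eq_zero_of_mem_modelSpace hk hS.mem]
  ring

theorem clarkOpInv_mem (hS : IsWanderingUnitVector H S e) (hM : IsInnerMultiplier H S e M)
    (α : ℂ) {g : E} (hg : g ∈ modelSpace H M) : clarkOpInv S M e α g ∈ modelSpace H M := by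
  obtain ⟨hgH, hg_perp⟩ := mem_modelSpace_iff.mp hg
  refine mem_modelSpace_iff.mpr ⟨hS.symm_apply_mem _ (H.add_mem (H.sub_mem hgH
    (H.smul_mem _ hS.mem)) (H.smul_mem _ hM.apply_mem)) ?_, fun h hh => ?_⟩
  · simp [hS.norm_eq_one, hM.inner_apply_eq_zero e hS.mem]
  · rw [clarkOpInv, ← S.inner_map_map, S.apply_symm_apply, hM.commute]
    have hSh := hS.apply_mem h hh
    simp only [inner_add_right, inner_sub_right, inner_smul_right, hg_perp _ hSh,
      hM.inner_apply_left_eq_zero hSh, M.inner_map_map,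
      inner_eq_zero_symm.mp (hS.inner_apply_eq_zero h hh)]
    ring

theorem clarkOp_clarkOpInv (hS : IsWanderingUnitVector H S e) (hM : IsInnerMultiplier H S e M)
    {α : ℂ} (hα : ‖α‖ = 1) {g : E} (hg : g ∈ modelSpace H M) :
    clarkOp S M e α (clarkOpInv S M e α g) = g := by
  have hMe : ⟪M e, S (clarkOpInv S M e α g)⟫_ℂ = conj α * ⟪e, g⟫_ℂ := by
    simp [clarkOpInv, (mem_modelSpace_iff.mp hg).2 e hS.mem, hM.inner_apply_left_eq_zero hS.mem,
      hS.norm_eq_one]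
  rw [clarkOp, hMe, clarkOpInv, S.apply_symm_apply, ← mul_assoc, Complex.mul_conj', hα]
  simp

theorem eq_of_forall_inner_eq {K : Submodule ℂ E} {g g' : E} (hg : g ∈ K) (hg' : g' ∈ K)
    (h : ∀ k ∈ K, ⟪k, g⟫_ℂ = ⟪k, g'⟫_ℂ) : g = g' := by
  rw [← sub_eq_zero, ← inner_self_eq_zero (𝕜 := ℂ), inner_sub_right, h _ (K.sub_mem hg hg'),
    sub_self]

end Clark

theorem fourierCoeff_eq_inner {T : ℝ} [Fact (0 < T)]
    (f : Lp ℂ 2 (AddCircle.haarAddCircle (T := T))) (n : ℤ) :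
    fourierCoeff (⇑f) n = ⟪fourierLp 2 n, f⟫_ℂ := by
  rw [← fourierBasis_repr, fourierBasis.repr_apply_apply, coe_fourierBasis]

namespace Clark

theorem memH2_iff (f : L2C) : memH2 ⇑f ↔ ∀ n < 0, ⟪fourierLp 2 n, f⟫_ℂ = 0 := by
  simp only [memH2, fourierCoeff_eq_inner]

def hardySpace : Submodule ℂ L2C where
  carrier := {f | memH2 ⇑f}
  zero_mem' := by simp [memH2_iff]
  add_mem' {f g} hf hg := by
    simp_all [memH2_iff, inner_add_right]
  smul_mem' c f hf := by
    simp_all [memH2_iff, inner_smul_right]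

theorem mem_hardySpace_iff {f : L2C} : f ∈ hardySpace ↔ ∀ n < 0, ⟪fourierLp 2 n, f⟫_ℂ = 0 :=
  memH2_iff f

theorem norm_zeta (x : Circ) : ‖zeta x‖ = 1 := by
  simpa [zeta] using Circle.norm_coe _

def mulZeta : L2C ≃ₗᵢ[ℂ] L2C :=
  Lp.mulUnimodular mC 2 zeta (map_continuous (fourier 1)).aestronglyMeasurable
    (.of_forall norm_zeta)

theorem coeFn_mulZeta (f : L2C) : ⇑(mulZeta f) =ᵐ[mC] fun x => zeta x * f x :=
  Lp.coeFn_mulUnimodular _ _ f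

theorem mulZeta_fourierLp (n : ℤ) : mulZeta (fourierLp 2 n) = fourierLp 2 (n + 1) := by
  refine Lp.ext ?_
  filter_upwards [coeFn_mulZeta (fourierLp 2 n), coeFn_fourierLp 2 n, coeFn_fourierLp 2 (n + 1)]
    with x h₁ h₂ h₃
  rw [h₁, h₂, h₃, add_comm, fourier_add, zeta]

theorem inner_fourierLp_mulZeta (n : ℤ) (f : L2C) :
    ⟪fourierLp 2 n, mulZeta f⟫_ℂ = ⟪fourierLp 2 (n - 1), f⟫_ℂ := by
  rw [← mulZeta.inner_map_map (fourierLp 2 (n - 1)), mulZeta_fourierLp, sub_add_cancel]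

theorem inner_fourierLp_mulZeta_symm (n : ℤ) (f : L2C) :
    ⟪fourierLp 2 n, mulZeta.symm f⟫_ℂ = ⟪fourierLp 2 (n + 1), f⟫_ℂ := by
  rw [← mulZeta.inner_map_map (fourierLp 2 n), mulZeta_fourierLp,
    LinearIsometryEquiv.apply_symm_apply]

theorem isWanderingUnitVector :
    IsWanderingUnitVector hardySpace mulZeta (fourierLp 2 0) where
  apply_mem x hx := mem_hardySpace_iff.mpr fun n hn => by
    rw [inner_fourierLp_mulZeta, mem_hardySpace_iff.mp hx _ (by omega)]
  symm_apply_mem x hx hx0 := mem_hardySpace_iff.mpr fun n hn => by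
    rw [inner_fourierLp_mulZeta_symm]
    rcases (show n + 1 = 0 ∨ n + 1 < 0 by omega) with h | h
    · rwa [h]
    · exact mem_hardySpace_iff.mp hx _ h
  mem := mem_hardySpace_iff.mpr fun n hn => orthonormal_fourier.inner_eq_zero hn.ne
  norm_eq_one := orthonormal_fourier.1 0
  inner_apply_eq_zero x hx := by
    rw [inner_fourierLp_mulZeta, mem_hardySpace_iff.mp hx _ (by omega)]

def mulInner {u : Circ → ℂ} (hu : BdryInner u) : L2C ≃ₗᵢ[ℂ] L2C :=
  Lp.mulUnimodular mC 2 u hu.1 hu.2.1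

section InnerFunction

variable {u : Circ → ℂ} (hu : BdryInner u)

theorem coeFn_mulInner (f : L2C) : ⇑(mulInner hu f) =ᵐ[mC] fun x => u x * f x :=
  Lp.coeFn_mulUnimodular _ _ f

theorem inner_fourierLp_mulInner_fourierLp (m n : ℤ) :
    ⟪fourierLp 2 m, mulInner hu (fourierLp 2 n)⟫_ℂ = fourierCoeff u (m - n) := by
  have h : ⇑(mulInner hu (fourierLp 2 n)) =ᵐ[mC] fun x => fourier n x * u x := by
    filter_upwards [coeFn_mulInner hu (fourierLp 2 n), coeFn_fourierLp 2 n] with x h₁ h₂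
    rw [h₁, h₂, mul_comm]
  rw [← fourierCoeff_eq_inner, fourierCoeff_congr_ae h, fourierCoeff, fourierCoeff]
  congr 1 with x
  rw [smul_eq_mul, smul_eq_mul, ← mul_assoc, ← fourier_add, neg_sub, sub_eq_neg_add]

theorem isInnerMultiplier (hu0 : fourierCoeff u 0 = 0) :
    IsInnerMultiplier hardySpace mulZeta (fourierLp 2 0) (mulInner hu).toLinearIsometry where
  commute x := Lp.mulUnimodular_comm _ _ hu.1 hu.2.1 x
  apply_mem := mem_hardySpace_iff.mpr fun n hn => by
    rw [LinearIsometryEquiv.coe_toLinearIsometry, inner_fourierLp_mulInner_fourierLp, sub_zero,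
      hu.2.2 n hn]
  inner_apply_eq_zero x hx := by
    have hsymm (n : ℤ) :
        ⟪(mulInner hu).symm (fourierLp 2 0), fourierLp 2 n⟫_ℂ = fourierCoeff u (-n) := by
      rw [← (mulInner hu).inner_map_map, LinearIsometryEquiv.apply_symm_apply,
        inner_fourierLp_mulInner_fourierLp, zero_sub]
    rw [LinearIsometryEquiv.coe_toLinearIsometry,
      ← (mulInner hu).apply_symm_apply (fourierLp 2 0), LinearIsometryEquiv.inner_map_map,
      ← fourierBasis.tsum_inner_mul_inner]
    refine (tsum_congr fun n => ?_).trans tsum_zero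
    rw [coe_fourierBasis, hsymm]
    rcases lt_trichotomy n 0 with hn | rfl | hn
    · rw [mem_hardySpace_iff.mp hx n hn, mul_zero]
    · rw [neg_zero, hu0, zero_mul]
    · rw [hu.2.2 (-n) (by omega), zero_mul]

theorem ip_coeFn (f g : L2C) : ip ⇑f ⇑g = ⟪g, f⟫_ℂ := by
  rw [L2.inner_def, ip]
  congr 1

theorem ip_congr {f f' g g' : Circ → ℂ} (hf : f =ᵐ[mC] f') (hg : g =ᵐ[mC] g') :
    ip f g = ip f' g' :=
  integral_congr_ae <| by filter_upwards [hf, hg] with x h₁ h₂; rw [h₁, h₂]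

theorem memKu_iff {f : L2C} :
    memKu u f ↔ f ∈ modelSpace hardySpace (mulInner hu).toLinearIsometry := by
  rw [mem_modelSpace_iff]
  refine and_congr Iff.rfl (forall₂_congr fun h _ => ?_)
  rw [LinearIsometryEquiv.coe_toLinearIsometry, ← ip_coeFn, ip_congr .rfl (coeFn_mulInner hu h)]

theorem clarkRel_iff (α : ℂ) (f g : L2C) :
    ClarkRel u α f g ↔ ∀ k ∈ modelSpace hardySpace (mulInner hu).toLinearIsometry,
      ⟪k, g⟫_ℂ = ⟪k, clarkOp mulZeta (mulInner hu).toLinearIsometry (fourierLp 2 0) α f⟫_ℂ := by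
  have hone : ⇑(fourierLp 2 0 : L2C) =ᵐ[mC] fun _ => 1 :=
    (coeFn_fourierLp 2 0).trans (.of_forall fun _ => fourier_zero)
  have hu_one : u =ᵐ[mC] ⇑(mulInner hu (fourierLp 2 0)) := by
    filter_upwards [coeFn_mulInner hu (fourierLp 2 0), hone] with x h₁ h₂
    rw [h₁, h₂, mul_one]
  have hc : ip ⇑f (fun x => u x * conj (zeta x)) =
      ⟪mulInner hu (fourierLp 2 0), mulZeta f⟫_ℂ := by
    calc ip ⇑f (fun x => u x * conj (zeta x)) = ip (fun x => zeta x * f x) u := by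
          simp only [ip, map_mul, Complex.conj_conj]
          congr 1 with x
          ring
      _ = _ := by rw [ip_congr (coeFn_mulZeta f).symm hu_one, ip_coeFn]
  refine forall_congr' fun k => ?_
  rw [memKu_iff hu]
  refine imp_congr_right fun hk => ?_
  rw [ip_coeFn, ip_congr (coeFn_mulZeta f).symm .rfl, ip_coeFn, hc, ip_congr hone.symm .rfl,
    ip_coeFn, inner_clarkOp isWanderingUnitVector hk]
  rfl

theorem clarkRel_iff_eq (hu0 : fourierCoeff u 0 = 0) (α : ℂ) {f g : L2C} (hf : memKu u f)
    (hg : memKu u g) :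
    ClarkRel u α f g ↔ g = clarkOp mulZeta (mulInner hu).toLinearIsometry (fourierLp 2 0) α f := by
  rw [memKu_iff hu] at hf hg
  rw [clarkRel_iff hu]
  refine ⟨eq_of_forall_inner_eq hg ?_, fun h _ _ => by rw [h]⟩
  exact clarkOp_mem isWanderingUnitVector (isInnerMultiplier hu hu0) α hf

end InnerFunction

end Clark

/-- Let `u` be inner with `u(0) = 0` and `α ∈ 𝕋`. The Clark
operator `U_α = S_u + α(1 ⊗ u/z)` on `K_u` — i.e. `U_α f = P_u(zf) + α⟨f, u/z⟩·1`,
characterized here by `ClarkRel` — is a well-defined unitary operator on `K_u`: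
every `f ∈ K_u` has a unique image `g ∈ K_u`, the map is isometric, and it is
surjective onto `K_u`. -/
theorem stmt_19 (u : Circ → ℂ) (hu : BdryInner u) (hu0 : fourierCoeff u 0 = 0)
    (α : ℂ) (hα : ‖α‖ = 1) :
    (∀ f : L2C, memKu u f → ∃! g : L2C, memKu u g ∧ ClarkRel u α f g) ∧
    (∀ f g : L2C, memKu u f → memKu u g → ClarkRel u α f g → ‖g‖ = ‖f‖) ∧
    (∀ g : L2C, memKu u g → ∃ f : L2C, memKu u f ∧ ClarkRel u α f g) := by
  have hS := Clark.isWanderingUnitVector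
  have hM := Clark.isInnerMultiplier hu hu0
  have hK (f : L2C) := Clark.memKu_iff hu (f := f)
  refine ⟨fun f hf => ?_, fun f g hf hg hfg => ?_, fun g hg => ?_⟩
  · have hUf := (hK _).2 (Clark.clarkOp_mem hS hM α ((hK f).1 hf))
    exact ⟨_, ⟨hUf, (Clark.clarkRel_iff_eq hu hu0 α hf hUf).2 rfl⟩,
      fun g ⟨hg, hfg⟩ => (Clark.clarkRel_iff_eq hu hu0 α hf hg).1 hfg⟩
  · rw [(Clark.clarkRel_iff_eq hu hu0 α hf hg).1 hfg, Clark.norm_clarkOp hS hM hα ((hK f).1 hf).1]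
  · have hVg := (hK _).2 (Clark.clarkOpInv_mem hS hM α ((hK g).1 hg))
    exact ⟨_, hVg, (Clark.clarkRel_iff_eq hu hu0 α hVg hg).2
      (Clark.clarkOp_clarkOpInv hS hM hα ((hK g).1 hg)).symm⟩
end
end
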